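/- Let χ be a chirotope of rank 2 over a finite set E. Starting from a fixed e ∈ E, iteratively define sets X⁰, X¹, ... by X^{a+1} = { x ∈ 𝐄 : χ([x^{(a)},x]) = 1 and χ([x,y]) ≥ 0 for all y with χ([x^{(a)},y]) = 1 }, where x^{(a)} ∈ X^a is arbitrary. Then X^{a+1} is independent of the choice of representative x^{(a)} ∈ X^a; more precisely, for all x₁, y₂ ∈ X^a (a > 0) and all x₂ ∈ 𝐄 one has χ([x₁,x₂]) = χ([y₂,x₂]). -/
import Mathlib


/-- The bar involution on signed indices: `(e, b) ↦ (e, ¬b)`. -/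
def bar {α : Type*} (x : α × Bool) : α × Bool := (x.1, !x.2)

/-- A chirotope of rank `r` over `α`: a map from `r`-tuples of signed indices
(oriented `(r-1)`-simplices) to `{-1,0,+1}` satisfying axioms (C1)–(C4). -/
structure IsChirotope (r : ℕ) (α : Type*) (χ : (Fin r → α × Bool) → ℤ) : Prop where
  rpos : 0 < r
  values : ∀ σ : Fin r → α × Bool, χ σ = -1 ∨ χ σ = 0 ∨ χ σ = 1
  degenerate : ∀ σ : Fin r → α × Bool,
      ¬ Function.Injective (fun i => (σ i).1) → χ σ = 0
  c1 : ∀ e : α, ∃ τ : Fin r → α, (∃ i, τ i = e) ∧ χ (fun i => (τ i, true)) ≠ 0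
  c2neg : ∀ (σ : Fin r → α × Bool) (i : Fin r), i.val = r - 1 →
      χ (Function.update σ i (bar (σ i))) = - χ σ
  c2swap : ∀ (σ : Fin r → α × Bool) (i j : Fin r), j.val = i.val + 1 →
      χ (fun m => if m = i then bar (σ j) else if m = j then σ i else σ m) = χ σ
  c3 : ∀ σ τ : Fin r → α × Bool, χ σ ≠ 0 → χ τ ≠ 0 →
      ∃ i, χ (Function.update σ ⟨r - 1, Nat.sub_lt rpos one_pos⟩ (τ i)) ≠ 0
  c4 : ∀ (σ : Fin r → α × Bool) (y₁ y₂ : α × Bool),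
      0 ≤ χ (Function.update σ ⟨r - 2, Nat.sub_lt rpos two_pos⟩ y₁) *
          χ (Function.update σ ⟨r - 1, Nat.sub_lt rpos one_pos⟩ y₂) →
      0 ≤ χ (Function.update σ ⟨r - 2, Nat.sub_lt rpos two_pos⟩ y₂) *
          χ (Function.update σ ⟨r - 1, Nat.sub_lt rpos one_pos⟩ (bar y₁)) →
      0 ≤ χ σ *
          χ (Function.update (Function.update σ ⟨r - 2, Nat.sub_lt rpos two_pos⟩ y₁)
              ⟨r - 1, Nat.sub_lt rpos one_pos⟩ y₂)

lemma bar_bar {α : Type*} (x : α × Bool) : bar (bar x) = x := by simp [bar]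

lemma upd_zero {α : Type*} (u v z : α × Bool) :
    Function.update ![u, v] ((⟨2 - 2, Nat.sub_lt two_pos two_pos⟩ : Fin 2)) z = ![z, v] := by
  funext i
  fin_cases i <;> rfl

lemma upd_one {α : Type*} (u v z : α × Bool) :
    Function.update ![u, v] ((⟨2 - 1, Nat.sub_lt two_pos one_pos⟩ : Fin 2)) z = ![u, z] := by
  funext i
  fin_cases i <;> rfl

section
variable {α : Type*} {χ : (Fin 2 → α × Bool) → ℤ} (h : IsChirotope 2 α χ)
include h

lemma chi_swap (u v : α × Bool) : χ ![bar v, u] = χ ![u, v] := by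
  have := h.c2swap ![u, v] 0 1 rfl
  have e : (fun m => if m = (0 : Fin 2) then bar (![u, v] 1) else if m = 1 then ![u, v] 0
      else ![u, v] m) = ![bar v, u] := by
    funext i; fin_cases i <;> rfl
  rwa [e] at this

lemma chi_negsnd (u v : α × Bool) : χ ![u, bar v] = - χ ![u, v] := by
  have := h.c2neg ![u, v] ⟨2 - 1, Nat.sub_lt two_pos one_pos⟩ rfl
  simp only [upd_one] at this
  have e : (![u, v] (⟨2 - 1, Nat.sub_lt two_pos one_pos⟩ : Fin 2)) = v := rfl
  rwa [e] at this

lemma chi_antisym (u v : α × Bool) : χ ![v, u] = - χ ![u, v] := by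
  have h1 : χ ![v, u] = χ ![u, bar v] := by
    rw [← chi_swap h u (bar v), bar_bar]
  rw [h1, chi_negsnd h]

lemma chi_key (w a b c : α × Bool) (hab : χ ![a, b] = 0) (hwa : χ ![w, a] = 1)
    (hwb : χ ![w, b] = 1) (hac : 0 ≤ χ ![a, c]) : 0 ≤ χ ![b, c] := by
  have H := h.c4 ![b, c] a (bar w)
  simp only [upd_zero, upd_one] at H
  have e1 : χ ![b, bar w] = 1 := by
    rw [chi_negsnd h, chi_antisym h, neg_neg, hwb]
  have e2 : χ ![b, bar a] = 0 := by
    rw [chi_negsnd h, chi_antisym h, neg_neg, hab]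
  have e3 : χ ![a, bar w] = 1 := by
    rw [chi_negsnd h, chi_antisym h, neg_neg, hwa]
  rw [e1, e2, e3, mul_one, mul_zero, mul_one] at H
  exact H (by linarith) le_rfl

end

/-- in the iterative construction of the rank-2 hyperline sequence from a
rank-2 chirotope, the next atom is independent of the chosen representative `x⁽ᵃ⁾`.
More precisely, if `x₁` and `y₂` both belong to the atom determined by `w`, i.e.
`χ([w,·]) = 1` and `χ([·,y]) ≥ 0` for every `y` with `χ([w,y]) = 1`, then
`χ([x₁,x₂]) = χ([y₂,x₂])` for every `x₂`. -/
theorem atom_independent_of_representative {α : Type*}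
    (χ : (Fin 2 → α × Bool) → ℤ) (h : IsChirotope 2 α χ)
    (w x₁ y₂ : α × Bool)
    (hx₁ : χ ![w, x₁] = 1 ∧ ∀ y, χ ![w, y] = 1 → 0 ≤ χ ![x₁, y])
    (hy₂ : χ ![w, y₂] = 1 ∧ ∀ y, χ ![w, y] = 1 → 0 ≤ χ ![y₂, y]) :
    ∀ x₂ : α × Bool, χ ![x₁, x₂] = χ ![y₂, x₂] := by
  have h12 : χ ![x₁, y₂] = 0 := by
    have h1 := hx₁.2 y₂ hy₂.1
    have h2 := hy₂.2 x₁ hx₁.1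
    rw [chi_antisym h] at h2
    omega
  have h21 : χ ![y₂, x₁] = 0 := by rw [chi_antisym h, h12]; ring
  intro c
  have A : 0 ≤ χ ![x₁, c] → 0 ≤ χ ![y₂, c] := chi_key h w x₁ y₂ c h12 hx₁.1 hy₂.1
  have B : 0 ≤ χ ![y₂, c] → 0 ≤ χ ![x₁, c] := chi_key h w y₂ x₁ c h21 hy₂.1 hx₁.1
  have A' : 0 ≤ χ ![x₁, bar c] → 0 ≤ χ ![y₂, bar c] :=
    chi_key h w x₁ y₂ (bar c) h12 hx₁.1 hy₂.1
  have B' : 0 ≤ χ ![y₂, bar c] → 0 ≤ χ ![x₁, bar c] :=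
    chi_key h w y₂ x₁ (bar c) h21 hy₂.1 hx₁.1
  simp only [chi_negsnd h] at A' B'
  rcases h.values ![x₁, c] with h1 | h1 | h1 <;>
    rcases h.values ![y₂, c] with h2 | h2 | h2 <;> omega
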